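/- Let θ ∈ (0,π/2), S the circle centered at (0, 1/sin θ) with radius cos θ/sin θ, and J := S ∩ B̄(0,1) the arc of S inside the closed unit disc. Define F(z) := 2z/(1+|z|²). Then F(J) is contained in the chord segment [a, b] joining a = (−cos θ, sin θ) and b = (cos θ, sin θ), and F maps J onto this chord. -/

import Mathlib

/-!
Clearing denominators, the circle `S` is `{p | sin θ * (1 + |p|²) = 2 p.2}`, i.e. exactly the preimage
under `F` of the horizontal line `y = sin θ`. Since `F` maps the closed unit disc onto itself (with
inverse `q ↦ q / (1 + √(1 - |q|²))`), `F(S ∩ D̄) = F(D̄) ∩ {y = sin θ} = D̄ ∩ {y = sin θ}`, which is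
the chord `[a, b]`.
-/

open Real

/-- The map `F(z) = 2z / (1 + |z|²)` on `ℝ²` (Euclidean norm). -/
noncomputable def stmt18F (p : ℝ × ℝ) : ℝ × ℝ :=
  (2 * p.1 / (1 + (p.1 ^ 2 + p.2 ^ 2)), 2 * p.2 / (1 + (p.1 ^ 2 + p.2 ^ 2)))

noncomputable def kleinToPoincare (q : ℝ × ℝ) : ℝ × ℝ :=
  (q.1 / (1 + √(1 - (q.1 ^ 2 + q.2 ^ 2))), q.2 / (1 + √(1 - (q.1 ^ 2 + q.2 ^ 2))))

lemma stmt18F_mem_closedDisc (p : ℝ × ℝ) :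
    (stmt18F p).1 ^ 2 + (stmt18F p).2 ^ 2 ≤ 1 := by
  simp only [stmt18F, div_pow, ← add_div]
  rw [div_le_one (by positivity)]
  nlinarith [sq_nonneg (1 - (p.1 ^ 2 + p.2 ^ 2))]

section kleinToPoincare

variable {q : ℝ × ℝ} (hq : q.1 ^ 2 + q.2 ^ 2 ≤ 1)
include hq

lemma kleinToPoincare_mem_closedDisc :
    (kleinToPoincare q).1 ^ 2 + (kleinToPoincare q).2 ^ 2 ≤ 1 := by
  have hk : 1 ≤ 1 + √(1 - (q.1 ^ 2 + q.2 ^ 2)) := le_add_of_nonneg_right (sqrt_nonneg _)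
  simp only [kleinToPoincare, div_pow, ← add_div]
  rw [div_le_one (by positivity)]
  nlinarith

lemma stmt18F_kleinToPoincare : stmt18F (kleinToPoincare q) = q := by
  set w := √(1 - (q.1 ^ 2 + q.2 ^ 2)) with hw
  have hw0 : 0 ≤ w := sqrt_nonneg _
  have hw2 : w ^ 2 = 1 - (q.1 ^ 2 + q.2 ^ 2) := sq_sqrt (by linarith)
  have hk : 0 < 1 + w := by linarith
  -- `(1 + w)² + |q|² = 2 (1 + w)`, so `1 + |q / (1 + w)|² = 2 / (1 + w)`
  have hden : 1 + ((q.1 / (1 + w)) ^ 2 + (q.2 / (1 + w)) ^ 2) = 2 / (1 + w) := by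
    field_simp
    linear_combination hw2
  simp only [stmt18F, kleinToPoincare, ← hw, hden]
  ext <;> field_simp

end kleinToPoincare

lemma stmt18F_image_closedDisc :
    stmt18F '' {p : ℝ × ℝ | p.1 ^ 2 + p.2 ^ 2 ≤ 1} = {p : ℝ × ℝ | p.1 ^ 2 + p.2 ^ 2 ≤ 1} := by
  refine Set.Subset.antisymm ?_ fun q hq => ?_
  · rintro _ ⟨p, -, rfl⟩
    exact stmt18F_mem_closedDisc p
  · exact ⟨kleinToPoincare q, kleinToPoincare_mem_closedDisc hq, stmt18F_kleinToPoincare hq⟩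

lemma circle_eq_preimage_stmt18F {s c : ℝ} (hs : s ≠ 0) (hsc : s ^ 2 + c ^ 2 = 1) :
    {p : ℝ × ℝ | p.1 ^ 2 + (p.2 - 1 / s) ^ 2 = (c / s) ^ 2} = stmt18F ⁻¹' {q | q.2 = s} := by
  ext p
  have hden : 1 + (p.1 ^ 2 + p.2 ^ 2) ≠ 0 := by positivity
  simp only [Set.mem_ofPred_eq, Set.mem_preimage, stmt18F]
  rw [div_eq_iff hden]
  field_simp
  constructor <;> intro h
  · apply mul_left_cancel₀ hs
    linear_combination -h - hsc
  · linear_combination -s * h - hsc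

lemma segment_eq_inter_closedDisc {s c : ℝ} (hc : 0 ≤ c) (hsc : s ^ 2 + c ^ 2 = 1) :
    segment ℝ (-c, s) (c, s) = {q : ℝ × ℝ | q.2 = s} ∩ {q | q.1 ^ 2 + q.2 ^ 2 ≤ 1} := by
  rw [← Prod.image_mk_segment_left, segment_eq_Icc (by linarith)]
  ext ⟨x, y⟩
  simp only [Set.mem_image, Set.mem_Icc, Prod.mk.injEq, Set.mem_inter_iff, Set.mem_ofPred_eq]
  constructor
  · rintro ⟨x, ⟨hlo, hhi⟩, rfl, rfl⟩
    exact ⟨rfl, by nlinarith⟩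
  · rintro ⟨rfl, h⟩
    exact ⟨x, abs_le_of_sq_le_sq' (by linarith) hc, rfl, rfl⟩

theorem stmt_18 (θ : ℝ) (hθ : θ ∈ Set.Ioo 0 (π / 2)) :
    stmt18F '' ({p : ℝ × ℝ | p.1 ^ 2 + (p.2 - 1 / sin θ) ^ 2 = (cos θ / sin θ) ^ 2} ∩
        {p : ℝ × ℝ | p.1 ^ 2 + p.2 ^ 2 ≤ 1})
      = segment ℝ ((-cos θ, sin θ)) ((cos θ, sin θ)) := by
  have hs : sin θ ≠ 0 := (sin_pos_of_pos_of_lt_pi hθ.1 (by linarith [hθ.2, pi_pos])).ne'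
  have hc : 0 ≤ cos θ := (cos_pos_of_mem_Ioo ⟨by linarith [hθ.1, pi_pos], hθ.2⟩).le
  rw [circle_eq_preimage_stmt18F hs (sin_sq_add_cos_sq θ), Set.inter_comm,
    Set.image_inter_preimage, stmt18F_image_closedDisc, Set.inter_comm,
    segment_eq_inter_closedDisc hc (sin_sq_add_cos_sq θ)]
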